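/- arXiv:1811.00391 — 4 statements merged into one kernel-verified Lean document; each statement's English description precedes it below -/
import Mathlib

section
/- The expected-value objective of the robust planning problem is permutation invariant in the tuple of plans: for a finite scenario set Ω with probability weights p : Ω → ℝ, p_ω ≥ 0, ∑_{ω∈Ω} p_ω = 1, matrices A(ω) ∈ ℝ^{N×M} for each ω ∈ Ω, vectors x_0, d ∈ ℝ^N, a symmetric matrix D ∈ ℝ^{N×N}, and a T-tuple of plans (u_0, …, u_{T-1}) in ℝ^M, define f(u_0, …, u_{T-1}) = ∑_{(ω_1,…,ω_T) ∈ Ω^T} (∏_{t=1}^{T} p_{ω_t}) · ‖x_0 + ∑_{t=0}^{T-1} A(ω_{t+1}) u_t − d‖²_D. Then for every permutation σ of {0, …, T-1}, f(u_{σ(0)}, …, u_{σ(T-1)}) = f(u_0, …, u_{T-1}). -/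
open Matrix

/-- The expected-value objective of the robust planning problem is permutation
invariant in the tuple of plans. -/
theorem stmt_3 {N M T : ℕ} {Ω : Type*} [Fintype Ω]
    (p : Ω → ℝ) (hp0 : ∀ ω, 0 ≤ p ω) (hp1 : ∑ ω, p ω = 1)
    (A : Ω → Matrix (Fin N) (Fin M) ℝ)
    (x0 d : Fin N → ℝ)
    (D : Matrix (Fin N) (Fin N) ℝ) (hD : D.IsSymm)
    (u : Fin T → (Fin M → ℝ)) (σ : Equiv.Perm (Fin T)) :
    (∑ ω : Fin T → Ω, (∏ t, p (ω t)) *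
      ((x0 + ∑ t, (A (ω t)).mulVec (u (σ t)) - d) ⬝ᵥ
        D.mulVec (x0 + ∑ t, (A (ω t)).mulVec (u (σ t)) - d)))
    = ∑ ω : Fin T → Ω, (∏ t, p (ω t)) *
      ((x0 + ∑ t, (A (ω t)).mulVec (u t) - d) ⬝ᵥ
        D.mulVec (x0 + ∑ t, (A (ω t)).mulVec (u t) - d)) := by
  refine Fintype.sum_equiv (Equiv.arrowCongr σ (Equiv.refl Ω)) _ _ fun ω => ?_
  have hprod : (∏ t, p (ω (σ.symm t))) = ∏ t, p (ω t) :=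
    Equiv.prod_comp σ.symm fun t => p (ω t)
  have hsum : (∑ t, (A (ω (σ.symm t))).mulVec (u t))
      = ∑ t, (A (ω t)).mulVec (u (σ t)) := by
    rw [← Equiv.sum_comp σ fun t => (A (ω (σ.symm t))).mulVec (u t)]
    simp
  simp [Equiv.arrowCongr, hprod, hsum]
end

section
/- Delivering the mean plan at every fraction is at least as good as any time-varying plan for the expected-value robust model: with a finite scenario set Ω, probability weights p : Ω → ℝ, p_ω ≥ 0, ∑_{ω∈Ω} p_ω = 1, matrices A(ω) ∈ ℝ^{N×M}, vectors x_0, d ∈ ℝ^N, a symmetric positive semidefinite matrix D ∈ ℝ^{N×N}, any T-tuple of plans (u_0, …, u_{T-1}) in ℝ^M, and ū = (1/T) ∑_{t=0}^{T-1} u_t, it holds that ∑_{(ω_1,…,ω_T) ∈ Ω^T} (∏_{t=1}^{T} p_{ω_t}) ‖x_0 + ∑_{t=0}^{T-1} A(ω_{t+1}) ū − d‖²_D ≤ ∑_{(ω_1,…,ω_T) ∈ Ω^T} (∏_{t=1}^{T} p_{ω_t}) ‖x_0 + ∑_{t=0}^{T-1} A(ω_{t+1}) u_t − d‖²_D. 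-/
/-!
The expected cost `J v` of a plan `v = (v_t)` is convex in `v`: it is a nonnegative combination
of the positive semidefinite form `‖·‖²_D` composed with affine maps. Since the scenarios of the
fractions are i.i.d., `J` is also invariant under permuting the fractions. The mean plan is the
average of the `T` cyclic shifts of `u`, so Jensen's inequality gives
`J ū ≤ (1/T) ∑ₖ J (u shifted by k) = J u`.
-/

open Matrix

theorem ConvexOn.fun_sum {𝕜 E β ι : Type*} [Semiring 𝕜] [PartialOrder 𝕜] [AddCommMonoid E]
    [AddCommMonoid β] [PartialOrder β] [IsOrderedAddMonoid β] [SMul 𝕜 E] [Module 𝕜 β]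
    {s : Set E} {t : Finset ι} {f : ι → E → β} (hs : Convex 𝕜 s)
    (hf : ∀ i ∈ t, ConvexOn 𝕜 s (f i)) : ConvexOn 𝕜 s fun x => ∑ i ∈ t, f i x := by
  classical
  induction t using Finset.induction_on with
  | empty => simpa using convexOn_const (0 : β) hs
  | insert i t hi ih =>
    simp only [Finset.sum_insert hi]
    exact (hf i (t.mem_insert_self i)).add (ih fun j hj => hf j (Finset.mem_insert_of_mem hj))

theorem ConvexOn.map_const_mean_le {𝕜 E ι : Type*} [Field 𝕜] [LinearOrder 𝕜]
    [IsStrictOrderedRing 𝕜] [AddCommGroup E] [Module 𝕜 E] [AddGroup ι] [Fintype ι]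
    {f : (ι → E) → 𝕜} (hf : ConvexOn 𝕜 Set.univ f) (u : ι → E)
    (hshift : ∀ k, f (fun t => u (t + k)) = f u) :
    f (fun _ => (Fintype.card ι : 𝕜)⁻¹ • ∑ k, u k) ≤ f u := by
  have hcard : (Fintype.card ι : 𝕜) ≠ 0 := Nat.cast_ne_zero.mpr Fintype.card_ne_zero
  have hmean : (fun _ => (Fintype.card ι : 𝕜)⁻¹ • ∑ k, u k)
      = ∑ k, (Fintype.card ι : 𝕜)⁻¹ • fun t => u (t + k) := by
    ext t
    simp only [Finset.sum_apply, Pi.smul_apply, ← Finset.smul_sum]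
    exact congrArg _ (Equiv.sum_comp (Equiv.addLeft t) u).symm
  calc f (fun _ => (Fintype.card ι : 𝕜)⁻¹ • ∑ k, u k)
      ≤ ∑ k, (Fintype.card ι : 𝕜)⁻¹ • f fun t => u (t + k) := by
        rw [hmean]
        refine hf.map_sum_le (fun _ _ => by positivity) ?_ fun _ _ => Set.mem_univ _
        simp [hcard]
    _ = f u := by simp [hshift, hcard]

section QuadraticForm

variable {𝕜 n : Type*} [Field 𝕜] [LinearOrder 𝕜] [IsStrictOrderedRing 𝕜] [Fintype n]

theorem convexOn_dotProduct_mulVec {D : Matrix n n 𝕜} (hD : ∀ v, 0 ≤ v ⬝ᵥ D *ᵥ v) :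
    ConvexOn 𝕜 Set.univ fun v => v ⬝ᵥ D *ᵥ v := by
  refine ⟨convex_univ, fun x _ y _ a b ha hb hab => ?_⟩
  have jensen_gap :
      a • (x ⬝ᵥ D *ᵥ x) + b • (y ⬝ᵥ D *ᵥ y) - (a • x + b • y) ⬝ᵥ D *ᵥ (a • x + b • y)
        = a * b * ((x - y) ⬝ᵥ D *ᵥ (x - y)) := by
    obtain rfl : b = 1 - a := by rw [← hab]; ring
    simp only [mulVec_add, mulVec_sub, mulVec_smul, dotProduct_add, add_dotProduct,
      dotProduct_sub, sub_dotProduct, dotProduct_smul, smul_dotProduct, smul_eq_mul]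
    ring
  have gap_nonneg := mul_nonneg (mul_nonneg ha hb) (hD (x - y))
  dsimp only
  linarith

end QuadraticForm

section ExpectedCost

variable {ι Ω n m : Type*} [Fintype ι] [DecidableEq ι] [Fintype Ω] [Fintype n] [Fintype m]

def expectedCost (p : Ω → ℝ) (A : Ω → Matrix n m ℝ) (x0 d : n → ℝ) (D : Matrix n n ℝ)
    (u : ι → m → ℝ) : ℝ :=
  ∑ ω : ι → Ω, (∏ t, p (ω t)) *
    ((x0 + ∑ t, A (ω t) *ᵥ u t - d) ⬝ᵥ D *ᵥ (x0 + ∑ t, A (ω t) *ᵥ u t - d))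

variable (p : Ω → ℝ) (A : Ω → Matrix n m ℝ) (x0 d : n → ℝ) (D : Matrix n n ℝ)

theorem expectedCost_comp_equiv (σ : ι ≃ ι) (u : ι → m → ℝ) :
    expectedCost p A x0 d D (u ∘ σ) = expectedCost p A x0 d D u := by
  unfold expectedCost
  refine Fintype.sum_equiv (σ.arrowCongr (Equiv.refl Ω)) _ _ fun ω => ?_
  have hprod : ∏ t, p (ω t) = ∏ t, p (ω (σ.symm t)) := (σ.symm.prod_comp _).symm
  have hsum : ∑ t, A (ω t) *ᵥ u (σ t) = ∑ t, A (ω (σ.symm t)) *ᵥ u t := by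
    rw [← σ.sum_comp fun t => A (ω (σ.symm t)) *ᵥ u t]
    simp only [Equiv.symm_apply_apply]
  simp only [Equiv.arrowCongr_apply, Equiv.coe_refl, Function.comp_apply, id_eq, hprod, hsum]


theorem convexOn_expectedCost (hp : ∀ ω, 0 ≤ p ω) (hD : ∀ v, 0 ≤ v ⬝ᵥ D *ᵥ v) :
    ConvexOn ℝ Set.univ (expectedCost (ι := ι) p A x0 d D) := by
  refine ConvexOn.fun_sum convex_univ fun ω _ => ?_
  let dose : (ι → m → ℝ) →ᵃ[ℝ] (n → ℝ) :=
    (∑ t, (A (ω t)).mulVecLin ∘ₗ LinearMap.proj t).toAffineMap + AffineMap.const ℝ _ (x0 - d)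
  refine (((convexOn_dotProduct_mulVec hD).comp_affineMap dose).smul
    (Finset.prod_nonneg fun t (_ : t ∈ Finset.univ) => hp (ω t))).congr fun u _ => ?_
  have hdose : dose u = x0 + ∑ t, A (ω t) *ᵥ u t - d := by
    simp only [dose, AffineMap.coe_add, LinearMap.coe_toAffineMap, LinearMap.coe_sum,
      LinearMap.coe_comp, LinearMap.coe_proj, AffineMap.coe_const, Pi.add_apply, Finset.sum_apply,
      Function.comp_apply, Function.eval, mulVecBilin_apply, Function.const_apply]
    abel
  simp only [Function.comp_apply, hdose, smul_eq_mul]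

end ExpectedCost

theorem stmt_5_general {N M T : ℕ} (hT : 0 < T) {Ω : Type*} [Fintype Ω]
    (p : Ω → ℝ) (hp0 : ∀ ω, 0 ≤ p ω)
    (A : Ω → Matrix (Fin N) (Fin M) ℝ)
    (x0 d : Fin N → ℝ)
    (D : Matrix (Fin N) (Fin N) ℝ)
    (hpsd : ∀ v : Fin N → ℝ, 0 ≤ v ⬝ᵥ D.mulVec v)
    (u : Fin T → (Fin M → ℝ)) :
    (∑ ω : Fin T → Ω, (∏ t, p (ω t)) *
      ((x0 + ∑ t, (A (ω t)).mulVec ((T : ℝ)⁻¹ • ∑ k, u k) - d) ⬝ᵥ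
        D.mulVec (x0 + ∑ t, (A (ω t)).mulVec ((T : ℝ)⁻¹ • ∑ k, u k) - d)))
    ≤ ∑ ω : Fin T → Ω, (∏ t, p (ω t)) *
      ((x0 + ∑ t, (A (ω t)).mulVec (u t) - d) ⬝ᵥ
        D.mulVec (x0 + ∑ t, (A (ω t)).mulVec (u t) - d)) := by
  have : NeZero T := ⟨hT.ne'⟩
  have h := (convexOn_expectedCost p A x0 d D hp0 hpsd).map_const_mean_le u
    fun k => expectedCost_comp_equiv p A x0 d D (Equiv.addRight k) u
  rwa [Fintype.card_fin] at h

/-- Delivering the mean plan at every fraction is at least as good as any time-varying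
plan for the expected-value robust model. -/
theorem stmt_5 {N M T : ℕ} (hT : 0 < T) {Ω : Type*} [Fintype Ω]
    (p : Ω → ℝ) (hp0 : ∀ ω, 0 ≤ p ω) (hp1 : ∑ ω, p ω = 1)
    (A : Ω → Matrix (Fin N) (Fin M) ℝ)
    (x0 d : Fin N → ℝ)
    (D : Matrix (Fin N) (Fin N) ℝ) (hD : D.IsSymm)
    (hpsd : ∀ v : Fin N → ℝ, 0 ≤ v ⬝ᵥ D.mulVec v)
    (u : Fin T → (Fin M → ℝ)) :
    (∑ ω : Fin T → Ω, (∏ t, p (ω t)) *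
      ((x0 + ∑ t, (A (ω t)).mulVec ((T : ℝ)⁻¹ • ∑ k, u k) - d) ⬝ᵥ
        D.mulVec (x0 + ∑ t, (A (ω t)).mulVec ((T : ℝ)⁻¹ • ∑ k, u k) - d)))
    ≤ ∑ ω : Fin T → Ω, (∏ t, p (ω t)) *
      ((x0 + ∑ t, (A (ω t)).mulVec (u t) - d) ⬝ᵥ
        D.mulVec (x0 + ∑ t, (A (ω t)).mulVec (u t) - d)) :=
  stmt_5_general hT p hp0 A x0 d D hpsd u
end

section
/- Delivering the mean plan at every fraction is at least as good as any time-varying plan for the worst-case robust model: with a nonempty finite scenario set Ω, matrices A(ω) ∈ ℝ^{N×M}, vectors x_0, d ∈ ℝ^N, a symmetric positive semidefinite matrix D ∈ ℝ^{N×N}, any T-tuple of plans (u_0, …, u_{T-1}) in ℝ^M, and ū = (1/T) ∑_{t=0}^{T-1} u_t, it holds that max_{(ω_1,…,ω_T) ∈ Ω^T} ‖x_0 + ∑_{t=0}^{T-1} A(ω_{t+1}) ū − d‖²_D ≤ max_{(ω_1,…,ω_T) ∈ Ω^T} ‖x_0 + ∑_{t=0}^{T-1} A(ω_{t+1}) u_t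 − d‖²_D. -/
open Matrix

private lemma dp_sum_left {N : ℕ} {ι : Type*} (S : Finset ι) (v : ι → Fin N → ℝ) (w : Fin N → ℝ) :
    (∑ s ∈ S, v s) ⬝ᵥ w = ∑ s ∈ S, v s ⬝ᵥ w := by
  simp only [dotProduct, Finset.sum_apply, Finset.sum_mul]
  exact Finset.sum_comm

private lemma dp_sum_right {N : ℕ} {ι : Type*} (S : Finset ι) (v : ι → Fin N → ℝ) (w : Fin N → ℝ) :
    w ⬝ᵥ (∑ s ∈ S, v s) = ∑ s ∈ S, w ⬝ᵥ v s := by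
  simp only [dotProduct, Finset.sum_apply, Finset.mul_sum]
  exact Finset.sum_comm

private lemma mv_sum {N M : ℕ} {ι : Type*} (A : Matrix (Fin N) (Fin M) ℝ)
    (S : Finset ι) (v : ι → Fin M → ℝ) :
    A.mulVec (∑ s ∈ S, v s) = ∑ s ∈ S, A.mulVec (v s) :=
  map_sum A.mulVecLin v S

private lemma B_comm {N : ℕ} (D : Matrix (Fin N) (Fin N) ℝ) (hD : D.IsSymm) (x y : Fin N → ℝ) :
    x ⬝ᵥ D.mulVec y = y ⬝ᵥ D.mulVec x := by
  rw [dotProduct_mulVec, ← hD, vecMul_transpose, dotProduct_comm, hD]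

private lemma B_le {N : ℕ} (D : Matrix (Fin N) (Fin N) ℝ) (hD : D.IsSymm)
    (hpsd : ∀ v : Fin N → ℝ, 0 ≤ v ⬝ᵥ D.mulVec v) (x y : Fin N → ℝ) :
    x ⬝ᵥ D.mulVec y ≤ (x ⬝ᵥ D.mulVec x + y ⬝ᵥ D.mulVec y) / 2 := by
  have h := hpsd (x - y)
  have hexp : (x - y) ⬝ᵥ D.mulVec (x - y)
      = x ⬝ᵥ D.mulVec x - x ⬝ᵥ D.mulVec y - y ⬝ᵥ D.mulVec x + y ⬝ᵥ D.mulVec y := by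
    rw [Matrix.mulVec_sub, sub_dotProduct, dotProduct_sub, dotProduct_sub]; ring
  have hc := B_comm D hD x y
  linarith [hexp ▸ h]

private lemma jensen {N T : ℕ} (D : Matrix (Fin N) (Fin N) ℝ) (hT : 0 < T) (hD : D.IsSymm)
    (hpsd : ∀ v : Fin N → ℝ, 0 ≤ v ⬝ᵥ D.mulVec v) (v : Fin T → Fin N → ℝ) :
    ((T : ℝ)⁻¹ • ∑ s, v s) ⬝ᵥ D.mulVec ((T : ℝ)⁻¹ • ∑ s, v s)
      ≤ (Finset.univ : Finset (Fin T)).sup'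
          (Finset.univ_nonempty_iff.2 ⟨⟨0, hT⟩⟩) (fun s => v s ⬝ᵥ D.mulVec (v s)) := by
  haveI : NeZero T := ⟨hT.ne'⟩
  set Mx := (Finset.univ : Finset (Fin T)).sup'
      (Finset.univ_nonempty_iff.2 ⟨⟨0, hT⟩⟩) (fun s => v s ⬝ᵥ D.mulVec (v s)) with hMx
  have hTpos : (0:ℝ) < (T:ℝ) := by exact_mod_cast hT
  have key : (∑ s, v s) ⬝ᵥ D.mulVec (∑ s, v s) ≤ (T:ℝ)^2 * Mx := by
    rw [mv_sum, dp_sum_left]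
    have hb : ∀ s : Fin T, (v s) ⬝ᵥ (∑ t, D.mulVec (v t)) ≤ ∑ _t : Fin T, Mx := by
      intro s
      rw [dp_sum_right]
      refine Finset.sum_le_sum fun t _ => ?_
      refine (B_le D hD hpsd (v s) (v t)).trans ?_
      have h1 : v s ⬝ᵥ D.mulVec (v s) ≤ Mx :=
        Finset.le_sup' (f := fun s => v s ⬝ᵥ D.mulVec (v s)) (Finset.mem_univ s)
      have h2 : v t ⬝ᵥ D.mulVec (v t) ≤ Mx :=
        Finset.le_sup' (f := fun s => v s ⬝ᵥ D.mulVec (v s)) (Finset.mem_univ t)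
      linarith
    calc ∑ s : Fin T, (v s) ⬝ᵥ (∑ t, D.mulVec (v t))
        ≤ ∑ _s : Fin T, ∑ _t : Fin T, Mx := Finset.sum_le_sum fun s _ => hb s
      _ = (T:ℝ)^2 * Mx := by
          simp only [Finset.sum_const, Finset.card_univ, Fintype.card_fin, smul_eq_mul,
            nsmul_eq_mul]
          ring
  have hsmul : ((T : ℝ)⁻¹ • ∑ s, v s) ⬝ᵥ D.mulVec ((T : ℝ)⁻¹ • ∑ s, v s)
      = (T:ℝ)⁻¹ * (T:ℝ)⁻¹ * ((∑ s, v s) ⬝ᵥ D.mulVec (∑ s, v s)) := by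
    rw [Matrix.mulVec_smul, smul_dotProduct, dotProduct_smul]
    simp only [smul_eq_mul]; ring
  rw [hsmul]
  calc (T:ℝ)⁻¹ * (T:ℝ)⁻¹ * ((∑ s, v s) ⬝ᵥ D.mulVec (∑ s, v s))
      ≤ (T:ℝ)⁻¹ * (T:ℝ)⁻¹ * ((T:ℝ)^2 * Mx) := by
        apply mul_le_mul_of_nonneg_left key
        positivity
    _ = Mx := by field_simp

/-- Delivering the mean plan at every fraction is at least as good as any time-varying
plan for the worst-case robust model. -/
theorem stmt_7 {N M T : ℕ} (hT : 0 < T) {Ω : Type*} [Fintype Ω] [Nonempty Ω]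
    (A : Ω → Matrix (Fin N) (Fin M) ℝ)
    (x0 d : Fin N → ℝ)
    (D : Matrix (Fin N) (Fin N) ℝ) (hD : D.IsSymm)
    (hpsd : ∀ v : Fin N → ℝ, 0 ≤ v ⬝ᵥ D.mulVec v)
    (u : Fin T → (Fin M → ℝ)) :
    (Finset.univ.sup' Finset.univ_nonempty (fun ω : Fin T → Ω =>
      (x0 + ∑ t, (A (ω t)).mulVec ((T : ℝ)⁻¹ • ∑ k, u k) - d) ⬝ᵥ
        D.mulVec (x0 + ∑ t, (A (ω t)).mulVec ((T : ℝ)⁻¹ • ∑ k, u k) - d)))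
    ≤ Finset.univ.sup' Finset.univ_nonempty (fun ω : Fin T → Ω =>
      (x0 + ∑ t, (A (ω t)).mulVec (u t) - d) ⬝ᵥ
        D.mulVec (x0 + ∑ t, (A (ω t)).mulVec (u t) - d)) := by
  haveI : NeZero T := ⟨hT.ne'⟩
  apply Finset.sup'_le
  intro ω _
  set v : Fin T → Fin N → ℝ := fun s => x0 + ∑ t, (A (ω (t + s))).mulVec (u t) - d with hv
  have hTne : (T:ℝ) ≠ 0 := by positivity
  set W : Fin N → ℝ := ∑ t : Fin T, ∑ k : Fin T, (A (ω t)).mulVec (u k) with hW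
  have hswap : ∑ s : Fin T, ∑ t : Fin T, (A (ω (t + s))).mulVec (u t) = W := by
    rw [Finset.sum_comm]
    refine (Finset.sum_congr rfl fun t _ => ?_).trans Finset.sum_comm
    exact Fintype.sum_equiv (Equiv.addLeft t) _ _ (fun s => rfl)
  have hsum : ∑ s, v s = (T:ℝ) • x0 + W - (T:ℝ) • d := by
    simp only [hv, Finset.sum_sub_distrib, Finset.sum_add_distrib, hswap, Finset.sum_const,
      Finset.card_univ, Fintype.card_fin]
    rw [Nat.cast_smul_eq_nsmul ℝ T x0, Nat.cast_smul_eq_nsmul ℝ T d]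
  have hL : ∑ t, (A (ω t)).mulVec ((T:ℝ)⁻¹ • ∑ k, u k) = (T:ℝ)⁻¹ • W := by
    have hterm : ∀ t : Fin T, (A (ω t)).mulVec ((T:ℝ)⁻¹ • ∑ k, u k)
        = (T:ℝ)⁻¹ • ∑ k, (A (ω t)).mulVec (u k) := fun t => by
      rw [Matrix.mulVec_smul, mv_sum]
    rw [Finset.sum_congr rfl fun t _ => hterm t, hW, ← Finset.smul_sum]
  have hmean : x0 + ∑ t, (A (ω t)).mulVec ((T : ℝ)⁻¹ • ∑ k, u k) - d
      = (T : ℝ)⁻¹ • ∑ s, v s := by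
    rw [hL, hsum, smul_sub, smul_add, smul_smul, inv_mul_cancel₀ hTne, one_smul, smul_smul,
      inv_mul_cancel₀ hTne, one_smul]
  rw [hmean]
  refine (jensen D hT hD hpsd v).trans ?_
  apply Finset.sup'_le
  intro s _
  exact Finset.le_sup' (f := fun ω' : Fin T → Ω =>
      (x0 + ∑ t, (A (ω' t)).mulVec (u t) - d) ⬝ᵥ
        D.mulVec (x0 + ∑ t, (A (ω' t)).mulVec (u t) - d))
    (Finset.mem_univ (fun t => ω (t + s)))
end

section
/- Exact reformulation of the expected quadratic penalty (Appendix A): let Ω be a finite set with probability weights p : Ω → ℝ, p_ω ≥ 0, ∑_{ω∈Ω} p_ω = 1, let S : Ω → ℝ^{M×M}, B ∈ ℝ^{N×M}, let D ∈ ℝ^{N×N} be symmetric, let x_0, d ∈ ℝ^N, u ∈ ℝ^M, and T ≥ 1. Write E[S] = ∑_{ω∈Ω} p_ω S(ω) and E[SᵀBᵀDBS] = ∑_{ω∈Ω} p_ω S(ω)ᵀ Bᵀ D B S(ω). Then ∑_{(ω_1,…,ω_T) ∈ Ω^T} (∏_{t=1}^{T} p_{ω_t}) · ‖x_0 + ∑_{t=0}^{T-1}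 B S(ω_{t+1}) u − d‖²_D = uᵀ ( T·E[SᵀBᵀDBS] + T(T−1)·E[S]ᵀ Bᵀ D B E[S] ) u + 2T·(x_0 − d)ᵀ D B E[S] u + (x_0 − d)ᵀ D (x_0 − d). -/
/-!
Conditioning on the first scenario writes the expectation over `Ω^(T+1)` as the `p`-weighted
average of expectations over `Ω^T` in which the offset `x₀ - d` is shifted by `B S(ω) u`. The
closed form, stated for an arbitrary offset, therefore follows by induction on `T`; each step is
the expansion `‖a + b‖²_D = ‖a‖²_D + 2 aᵀ D b + ‖b‖²_D`, valid because `D` is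
symmetric.
-/

open Matrix

section TupleWeights

variable {Ω R : Type*} [Fintype Ω] [CommSemiring R]

theorem sum_pi_fin_succ_prod_mul {T : ℕ} (p : Ω → R) (F : (Fin (T + 1) → Ω) → R) :
    ∑ ω : Fin (T + 1) → Ω, (∏ t, p (ω t)) * F ω
      = ∑ x, p x * ∑ ω : Fin T → Ω, (∏ t, p (ω t)) * F (Fin.cons x ω) := by
  rw [← (Fin.consEquiv fun _ => Ω).sum_comp, Fintype.sum_prod_type]
  simp only [Fin.consEquiv_apply, Fin.prod_univ_succ, Fin.cons_zero, Fin.cons_succ,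
    Finset.mul_sum, mul_assoc]
  rfl

end TupleWeights

section SymmetricBilinear

variable {n R : Type*} [Fintype n] [CommRing R] {D : Matrix n n R}

theorem Matrix.IsSymm.dotProduct_mulVec_comm (hD : D.IsSymm) (v w : n → R) :
    v ⬝ᵥ D *ᵥ w = w ⬝ᵥ D *ᵥ v := by
  rw [dotProduct_mulVec, ← mulVec_transpose, hD.eq, dotProduct_comm]

theorem Matrix.IsSymm.add_dotProduct_mulVec_add (hD : D.IsSymm) (v w : n → R) :
    (v + w) ⬝ᵥ D *ᵥ (v + w) = v ⬝ᵥ D *ᵥ v + 2 * (v ⬝ᵥ D *ᵥ w) + w ⬝ᵥ D *ᵥ w := by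
  rw [mulVec_add, dotProduct_add, add_dotProduct, add_dotProduct,
    hD.dotProduct_mulVec_comm w v]
  ring

theorem sum_mul_dotProduct_mulVec {Ω : Type*} [Fintype Ω] (p : Ω → R) (w : n → R)
    (v : Ω → n → R) :
    ∑ x, p x * (w ⬝ᵥ D *ᵥ v x) = w ⬝ᵥ D *ᵥ ∑ x, p x • v x := by
  simp only [mulVec_sum, dotProduct_sum, mulVec_smul, dotProduct_smul, smul_eq_mul]

theorem dotProduct_transpose_mul_mul_mulVec {m : Type*} [Fintype m] (A : Matrix n m R)
    (u : m → R) :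
    u ⬝ᵥ (Aᵀ * D * A) *ᵥ u = (A *ᵥ u) ⬝ᵥ D *ᵥ (A *ᵥ u) := by
  rw [← mulVec_mulVec, ← mulVec_mulVec, dotProduct_mulVec, vecMul_transpose]

end SymmetricBilinear

section IidExpansion

variable {Ω n R : Type*} [Fintype Ω] [Fintype n] [CommRing R] {p : Ω → R} {D : Matrix n n R}

theorem sum_pi_prod_mul_dotProduct_mulVec_add_sum (hp : ∑ x, p x = 1) (hD : D.IsSymm)
    (v : Ω → n → R) (T : ℕ) (a : n → R) :
    ∑ ω : Fin T → Ω, (∏ t, p (ω t)) *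
        ((a + ∑ t, v (ω t)) ⬝ᵥ D *ᵥ (a + ∑ t, v (ω t)))
      = a ⬝ᵥ D *ᵥ a
        + T * (2 * (a ⬝ᵥ D *ᵥ ∑ x, p x • v x) + ∑ x, p x * (v x ⬝ᵥ D *ᵥ v x))
        + T * (T - 1) * ((∑ x, p x • v x) ⬝ᵥ D *ᵥ ∑ x, p x • v x) := by
  induction T generalizing a with
  | zero => simp
  | succ T ih =>
    set μ := ∑ x, p x • v x
    set Ed := ∑ x, p x * (v x ⬝ᵥ D *ᵥ v x)
    rw [sum_pi_fin_succ_prod_mul]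
    simp only [Fin.sum_univ_succ, Fin.cons_zero, Fin.cons_succ, ← add_assoc, ih]
    have hmean_a : ∑ x, p x * (a ⬝ᵥ D *ᵥ v x) = a ⬝ᵥ D *ᵥ μ :=
      sum_mul_dotProduct_mulVec p a v
    have hmean_μ : ∑ x, p x * (v x ⬝ᵥ D *ᵥ μ) = μ ⬝ᵥ D *ᵥ μ := by
      simp only [hD.dotProduct_mulVec_comm _ μ]
      exact sum_mul_dotProduct_mulVec p μ v
    set K := a ⬝ᵥ D *ᵥ a + T * (2 * (a ⬝ᵥ D *ᵥ μ) + Ed) + T * (T - 1) * (μ ⬝ᵥ D *ᵥ μ)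
    calc _ = ∑ x, (p x * K + 2 * (p x * (a ⬝ᵥ D *ᵥ v x)) + p x * (v x ⬝ᵥ D *ᵥ v x)
          + 2 * T * (p x * (v x ⬝ᵥ D *ᵥ μ))) := by
          refine Finset.sum_congr rfl fun x _ => ?_
          rw [hD.add_dotProduct_mulVec_add, add_dotProduct]
          ring
      _ = (∑ x, p x) * K + 2 * ∑ x, p x * (a ⬝ᵥ D *ᵥ v x) + Ed
          + 2 * T * ∑ x, p x * (v x ⬝ᵥ D *ᵥ μ) := by
          simp only [Finset.sum_add_distrib, Finset.sum_mul, Finset.mul_sum, Ed]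
      _ = _ := by
          rw [hp, hmean_a, hmean_μ]
          push_cast
          ring

end IidExpansion

theorem stmt_13_general {N M T : ℕ} {Ω : Type*} [Fintype Ω]
    (p : Ω → ℝ) (hp1 : ∑ ω, p ω = 1)
    (S : Ω → Matrix (Fin M) (Fin M) ℝ)
    (B : Matrix (Fin N) (Fin M) ℝ)
    (D : Matrix (Fin N) (Fin N) ℝ) (hD : D.IsSymm)
    (x0 d : Fin N → ℝ) (u : Fin M → ℝ) :
    (∑ ω : Fin T → Ω, (∏ t, p (ω t)) *
      ((x0 + ∑ t, (B * S (ω t)).mulVec u - d) ⬝ᵥ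
        D.mulVec (x0 + ∑ t, (B * S (ω t)).mulVec u - d)))
    = u ⬝ᵥ (((T : ℝ) • ∑ ω, p ω • ((S ω)ᵀ * Bᵀ * D * B * S ω)
          + ((T : ℝ) * ((T : ℝ) - 1)) •
            ((∑ ω, p ω • S ω)ᵀ * Bᵀ * D * B * (∑ ω, p ω • S ω))).mulVec u)
      + 2 * (T : ℝ) * ((x0 - d) ⬝ᵥ (D * B * (∑ ω, p ω • S ω)).mulVec u)
      + (x0 - d) ⬝ᵥ D.mulVec (x0 - d) := by
  have hmean : (B * ∑ ω, p ω • S ω) *ᵥ u = ∑ ω, p ω • (B * S ω) *ᵥ u := by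
    simp only [Matrix.mul_sum, Matrix.mul_smul, sum_mulVec, smul_mulVec]
  have hquad : ∀ A : Matrix (Fin M) (Fin M) ℝ,
      u ⬝ᵥ (Aᵀ * Bᵀ * D * B * A) *ᵥ u = ((B * A) *ᵥ u) ⬝ᵥ D *ᵥ ((B * A) *ᵥ u) := by
    intro A
    rw [← dotProduct_transpose_mul_mul_mulVec, transpose_mul]
    simp only [Matrix.mul_assoc]
  have hcross : (x0 - d) ⬝ᵥ (D * B * ∑ ω, p ω • S ω) *ᵥ u
      = (x0 - d) ⬝ᵥ D *ᵥ ∑ ω, p ω • (B * S ω) *ᵥ u := by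
    rw [Matrix.mul_assoc, ← mulVec_mulVec, hmean]
  have hexp := sum_pi_prod_mul_dotProduct_mulVec_add_sum hp1 hD
    (fun ω => (B * S ω) *ᵥ u) T (x0 - d)
  beta_reduce at hexp
  simp only [add_sub_right_comm x0]
  rw [hexp, add_mulVec, dotProduct_add, smul_mulVec, smul_mulVec, dotProduct_smul,
    dotProduct_smul, hquad, hmean, hcross, sum_mulVec, dotProduct_sum]
  simp only [smul_mulVec, dotProduct_smul, hquad, smul_eq_mul]
  ring

/-- Exact reformulation of the expected quadratic penalty (Appendix A): the expectation
over i.i.d. scenario tuples of the weighted quadratic penalty, for a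
time-and-scenario-independent plan `u`, equals an explicit quadratic function of `u`. -/
theorem stmt_13 {N M T : ℕ} (hT : 1 ≤ T) {Ω : Type*} [Fintype Ω]
    (p : Ω → ℝ) (hp0 : ∀ ω, 0 ≤ p ω) (hp1 : ∑ ω, p ω = 1)
    (S : Ω → Matrix (Fin M) (Fin M) ℝ)
    (B : Matrix (Fin N) (Fin M) ℝ)
    (D : Matrix (Fin N) (Fin N) ℝ) (hD : D.IsSymm)
    (x0 d : Fin N → ℝ) (u : Fin M → ℝ) :
    (∑ ω : Fin T → Ω, (∏ t, p (ω t)) *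
      ((x0 + ∑ t, (B * S (ω t)).mulVec u - d) ⬝ᵥ
        D.mulVec (x0 + ∑ t, (B * S (ω t)).mulVec u - d)))
    = u ⬝ᵥ (((T : ℝ) • ∑ ω, p ω • ((S ω)ᵀ * Bᵀ * D * B * S ω)
          + ((T : ℝ) * ((T : ℝ) - 1)) •
            ((∑ ω, p ω • S ω)ᵀ * Bᵀ * D * B * (∑ ω, p ω • S ω))).mulVec u)
      + 2 * (T : ℝ) * ((x0 - d) ⬝ᵥ (D * B * (∑ ω, p ω • S ω)).mulVec u)
      + (x0 - d) ⬝ᵥ D.mulVec (x0 - d) :=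
  stmt_13_general p hp1 S B D hD x0 d u
end
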